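/- (Summability of block gradients) Along any sequence generated by the algorithm, with τ = max{L_i : i = 1,…,n}, the total sum of squared block-gradient norms is finite and bounded by the initial value: Σ_{k=1}^∞ Σ_{i=1}^n ‖∇_i f(x^{k,i−1})‖² ≤ 2τ f(x^0). -/

import Mathlib

open Finset Filter

noncomputable def obj {d n : ℕ} {J : Type*} (a : J → EuclideanSpace ℝ (Fin d))
    (A : Fin n → Finset J) (dhat : Fin n → J → ℝ)
    (B : Fin n → Finset (Fin n)) (lhat : Fin n → Fin n → ℝ)
    (x : Fin n → EuclideanSpace ℝ (Fin d)) : ℝ :=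
  (∑ i, ∑ j ∈ A i, max (‖x i - a j‖ - dhat i j) 0 ^ 2)
    + (1 / 2) * ∑ i, ∑ q ∈ B i, max (‖x i - x q‖ - lhat i q) 0 ^ 2

noncomputable def projBall {d : ℕ} (a : EuclideanSpace ℝ (Fin d)) (r : ℝ)
    (z : EuclideanSpace ℝ (Fin d)) : EuclideanSpace ℝ (Fin d) :=
  if ‖z - a‖ ≤ r then z else a + (r / ‖z - a‖) • (z - a)

/-- Partial gradient of `f` with respect to the `i`-th block. -/
noncomputable def blockGrad {d n : ℕ} (f : (Fin n → EuclideanSpace ℝ (Fin d)) → ℝ)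
    (i : Fin n) (x : Fin n → EuclideanSpace ℝ (Fin d)) : EuclideanSpace ℝ (Fin d) :=
  gradient (fun y => f (Function.update x i y)) (x i)

/-- The Coop. PPM algorithm: `X (k+1)` is obtained from `X k` by updating the
blocks successively for `i = 1, …, n`. -/
def IsPPM {d n : ℕ} {J : Type*} (a : J → EuclideanSpace ℝ (Fin d))
    (A : Fin n → Finset J) (dhat : Fin n → J → ℝ)
    (B : Fin n → Finset (Fin n)) (lhat : Fin n → Fin n → ℝ)
    (X : ℕ → Fin n → EuclideanSpace ℝ (Fin d)) : Prop :=
  ∀ (k : ℕ) (i : Fin n),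
    X (k + 1) i = (1 / 2 : ℝ) • X k i
      + (1 / (2 * (((A i).card : ℝ) + ((B i).card : ℝ)))) •
        ((∑ j ∈ A i, projBall (a j) (dhat i j) (X k i))
          + ∑ q ∈ B i, projBall (if q < i then X (k + 1) q else X k q) (lhat i q) (X k i))

/-- The intermediate configuration `x^{k+1, m}`: the first `m` blocks are those of
`X (k+1)` and the remaining blocks are those of `X k`. -/
def interm {d n : ℕ} (X : ℕ → Fin n → EuclideanSpace ℝ (Fin d)) (k m : ℕ) :
    Fin n → EuclideanSpace ℝ (Fin d) :=
  fun t => if (t : ℕ) < m then X (k + 1) t else X k t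

/-!
Every block update of Coop. PPM is exactly a gradient step `x_i ↦ x_i - L_i⁻¹ • ∇_i f` on `f`
restricted to the block `i`. Each term `max (‖z - a‖ - r) 0 ^ 2` is the squared distance to
the ball `B(a, r)`, with gradient `2 • (z - P z)`, and is sandwiched between its linearization
and the linearization plus `‖v‖ ^ 2`; hence the block objective satisfies the descent
inequality with constant `L_i`, and one step decreases `f` by at least `‖∇_i f‖ ^ 2 / (2 L_i)`.
These decreases telescope over the blocks and the sweeps, and `f ≥ 0`.
-/

open RealInnerProductSpace

lemma summable_and_tsum_le_of_le_sub_succ {u F : ℕ → ℝ} (hu : ∀ k, 0 ≤ u k)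
    (hF : ∀ k, 0 ≤ F k) (h : ∀ k, u k ≤ F k - F (k + 1)) :
    Summable u ∧ ∑' k, u k ≤ F 0 := by
  have hpartial : ∀ K, ∑ k ∈ range K, u k ≤ F 0 := fun K =>
    calc ∑ k ∈ range K, u k ≤ ∑ k ∈ range K, (F k - F (k + 1)) := sum_le_sum fun k _ => h k
      _ = F 0 - F K := sum_range_sub' F K
      _ ≤ F 0 := sub_le_self _ (hF K)
  exact ⟨summable_of_sum_range_le hu hpartial, Real.tsum_le_of_sum_range_le hu hpartial⟩

lemma sum_apply_update {ι E M : Type*} [Fintype ι] [DecidableEq ι] [AddCommGroup M]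
    (F : ι → E → M) (x : ι → E) (i : ι) (y : E) :
    ∑ p, F p (Function.update x i y p) = ∑ p, F p (x p) + (F i y - F i (x i)) := by
  rw [← add_sum_erase _ _ (mem_univ i), ← add_sum_erase _ _ (mem_univ i),
    Function.update_self, sum_congr rfl fun p hp => by
      rw [Function.update_of_ne (ne_of_mem_erase hp)]]
  abel

lemma sum_sum_apply_update_of_symm {ι E M : Type*} [Fintype ι] [DecidableEq ι]
    [AddCommGroup M] (K : ι → ι → E → E → M) (hK : ∀ p q u v, K p q u v = K q p v u)
    (hdiag : ∀ p u v, K p p u v = 0) (x : ι → E) (i : ι) (y : E) :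
    ∑ p, ∑ q, K p q (Function.update x i y p) (Function.update x i y q)
      = ∑ p, ∑ q, K p q (x p) (x q) + 2 • ∑ q, (K i q y (x q) - K i q (x i) (x q)) := by
  set x' := Function.update x i y
  calc ∑ p, ∑ q, K p q (x' p) (x' q)
      = ∑ p, (∑ q, K p q (x' p) (x q) + (K i p y (x' p) - K i p (x i) (x' p))) := by
        refine sum_congr rfl fun p _ => ?_
        rw [sum_apply_update (fun q => K p q (x' p)), hK p i, hK p i]
    _ = ∑ p, ∑ q, K p q (x p) (x q) + 2 • ∑ q, (K i q y (x q) - K i q (x i) (x q)) := by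
        rw [sum_add_distrib, sum_apply_update (fun p u => ∑ q, K p q u (x q)),
          sum_apply_update (fun p u => K i p y u - K i p (x i) u)]
        simp only [hdiag, sub_zero, sum_sub_distrib, two_smul]
        abel

section Ball

variable {d : ℕ}

/-- For `0 ≤ r` this is the squared distance from `z` to the closed ball `B(a, r)`. -/
noncomputable def sqDistBall (a : EuclideanSpace ℝ (Fin d)) (r : ℝ)
    (z : EuclideanSpace ℝ (Fin d)) : ℝ :=
  max (‖z - a‖ - r) 0 ^ 2

variable {a z w : EuclideanSpace ℝ (Fin d)} {r : ℝ}

lemma norm_projBall_sub_le (hr : 0 ≤ r) : ‖projBall a r z - a‖ ≤ r := by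
  unfold projBall
  split_ifs with h
  · exact h
  · have hz : 0 < ‖z - a‖ := hr.trans_lt (not_le.mp h)
    rw [add_sub_cancel_left, norm_smul, Real.norm_of_nonneg (by positivity),
      div_mul_cancel₀ _ hz.ne']

lemma sub_projBall_of_lt (h : r < ‖z - a‖) :
    z - projBall a r z = (1 - r / ‖z - a‖) • (z - a) := by
  rw [projBall, if_neg (not_le.mpr h), sub_smul, one_smul]
  abel

lemma norm_sub_projBall (hr : 0 ≤ r) : ‖z - projBall a r z‖ = max (‖z - a‖ - r) 0 := by
  by_cases h : ‖z - a‖ ≤ r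
  · rw [projBall, if_pos h, sub_self, norm_zero, max_eq_right (by linarith)]
  · replace h := not_le.mp h
    have hz : 0 < ‖z - a‖ := hr.trans_lt h
    rw [sub_projBall_of_lt h, norm_smul, Real.norm_of_nonneg, max_eq_left (by linarith)]
    · field_simp
    · rw [sub_nonneg, div_le_one hz]; exact h.le

lemma sqDistBall_eq (hr : 0 ≤ r) : sqDistBall a r z = ‖z - projBall a r z‖ ^ 2 := by
  rw [sqDistBall, norm_sub_projBall hr]

lemma sqDistBall_le_sq_norm_sub (hw : ‖w - a‖ ≤ r) : sqDistBall a r z ≤ ‖z - w‖ ^ 2 := by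
  have : ‖z - a‖ - r ≤ ‖z - w‖ := by
    linarith [norm_sub_le_norm_sub_add_norm_sub z w a]
  exact pow_le_pow_left₀ (le_max_right _ _) (max_le this (norm_nonneg _)) 2

lemma inner_sub_projBall_nonpos (hr : 0 ≤ r) (hw : ‖w - a‖ ≤ r) :
    ⟪z - projBall a r z, w - projBall a r z⟫ ≤ 0 := by
  by_cases h : ‖z - a‖ ≤ r
  · simp [projBall, h]
  replace h := not_le.mp h
  have hz : 0 < ‖z - a‖ := hr.trans_lt h
  have hw' : w - projBall a r z = (w - a) - (r / ‖z - a‖) • (z - a) := by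
    rw [projBall, if_neg (not_le.mpr h)]; abel
  have hcs : ⟪z - a, w - a⟫ ≤ ‖z - a‖ * r :=
    (real_inner_le_norm _ _).trans (mul_le_mul_of_nonneg_left hw (norm_nonneg _))
  rw [sub_projBall_of_lt h, hw', real_inner_smul_left, inner_sub_right, real_inner_smul_right,
    real_inner_self_eq_norm_sq]
  refine mul_nonpos_of_nonneg_of_nonpos ?_ ?_
  · rw [sub_nonneg, div_le_one hz]; exact h.le
  · have : r / ‖z - a‖ * ‖z - a‖ ^ 2 = ‖z - a‖ * r := by field_simp
    linarith

lemma sqDistBall_add_le (hr : 0 ≤ r) (v : EuclideanSpace ℝ (Fin d)) :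
    sqDistBall a r (z + v) ≤ sqDistBall a r z + 2 * ⟪z - projBall a r z, v⟫ + ‖v‖ ^ 2 := by
  calc sqDistBall a r (z + v) ≤ ‖z + v - projBall a r z‖ ^ 2 :=
        sqDistBall_le_sq_norm_sub (norm_projBall_sub_le hr)
    _ = ‖(z - projBall a r z) + v‖ ^ 2 := by congr 2; abel
    _ = _ := by rw [norm_add_sq_real, sqDistBall_eq hr]

lemma le_sqDistBall_add (hr : 0 ≤ r) (v : EuclideanSpace ℝ (Fin d)) :
    sqDistBall a r z + 2 * ⟪z - projBall a r z, v⟫ ≤ sqDistBall a r (z + v) := by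
  set p := projBall a r z
  set p' := projBall a r (z + v)
  have hvar : 0 ≤ ⟪z - p, p - p'⟫ := by
    have := inner_sub_projBall_nonpos (a := a) (z := z) hr
      (norm_projBall_sub_le (a := a) (z := z + v) hr)
    rw [← neg_sub p' p, inner_neg_right]; linarith
  have hsplit : z + v - p' = (z - p) + (v + (p - p')) := by abel
  rw [sqDistBall_eq hr, sqDistBall_eq hr, hsplit, norm_add_sq_real, inner_add_right]
  nlinarith [sq_nonneg ‖v + (p - p')‖]

end Ball

section Gradient

variable {E : Type*} [NormedAddCommGroup E] [InnerProductSpace ℝ E]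

lemma hasGradientAt_of_le_of_le [CompleteSpace E] {f : E → ℝ} {g z : E} {C : ℝ}
    (hle : ∀ v, f (z + v) ≤ f z + ⟪g, v⟫ + C * ‖v‖ ^ 2) (hge : ∀ v, f z + ⟪g, v⟫ ≤ f (z + v)) :
    HasGradientAt f g z := by
  rw [hasGradientAt_iff_isLittleO_nhds_zero]
  refine Asymptotics.IsBigO.trans_isLittleO ?_ (Asymptotics.isLittleO_norm_pow_id one_lt_two)
  refine Asymptotics.IsBigO.of_bound C (Eventually.of_forall fun v => ?_)
  rw [Real.norm_eq_abs, abs_le, norm_pow, norm_norm]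
  constructor <;> linarith [hle v, hge v]

lemma sq_norm_le_of_descent {f : E → ℝ} {g z : E} {L : ℝ} (hL : 0 < L)
    (h : ∀ v, f (z + v) ≤ f z + ⟪g, v⟫ + L / 2 * ‖v‖ ^ 2) :
    ‖g‖ ^ 2 ≤ 2 * L * (f z - f (z - L⁻¹ • g)) := by
  have hstep := h (-(L⁻¹ • g))
  rw [← sub_eq_add_neg, inner_neg_right, real_inner_smul_right, real_inner_self_eq_norm_sq,
    norm_neg, norm_smul, mul_pow, Real.norm_of_nonneg (inv_nonneg.mpr hL.le)] at hstep
  have : L / 2 * ((L⁻¹) ^ 2 * ‖g‖ ^ 2) = L⁻¹ * ‖g‖ ^ 2 / 2 := by field_simp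
  rw [this] at hstep
  have : 2 * L * (L⁻¹ * ‖g‖ ^ 2 / 2) = ‖g‖ ^ 2 := by field_simp
  nlinarith

end Gradient

section Objective

variable {d n : ℕ} {J : Type*} {a : J → EuclideanSpace ℝ (Fin d)} {A : Fin n → Finset J}
  {dhat : Fin n → J → ℝ} {B : Fin n → Finset (Fin n)} {lhat : Fin n → Fin n → ℝ}

/-- Each pair term occurs twice in `obj` (once from each end, hence the factor `1 / 2` there)
but only once here. -/
noncomputable def blockObj (a : J → EuclideanSpace ℝ (Fin d)) (A : Fin n → Finset J)
    (dhat : Fin n → J → ℝ) (B : Fin n → Finset (Fin n)) (lhat : Fin n → Fin n → ℝ)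
    (x : Fin n → EuclideanSpace ℝ (Fin d)) (i : Fin n) (y : EuclideanSpace ℝ (Fin d)) : ℝ :=
  ∑ j ∈ A i, sqDistBall (a j) (dhat i j) y + ∑ q ∈ B i, sqDistBall (x q) (lhat i q) y

noncomputable def blockObjGrad (a : J → EuclideanSpace ℝ (Fin d)) (A : Fin n → Finset J)
    (dhat : Fin n → J → ℝ) (B : Fin n → Finset (Fin n)) (lhat : Fin n → Fin n → ℝ)
    (x : Fin n → EuclideanSpace ℝ (Fin d)) (i : Fin n) (y : EuclideanSpace ℝ (Fin d)) :
    EuclideanSpace ℝ (Fin d) :=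
  (2 : ℝ) • (∑ j ∈ A i, (y - projBall (a j) (dhat i j) y)
    + ∑ q ∈ B i, (y - projBall (x q) (lhat i q) y))

lemma obj_nonneg (x : Fin n → EuclideanSpace ℝ (Fin d)) : 0 ≤ obj a A dhat B lhat x := by
  unfold obj; positivity

lemma obj_update (hBirr : ∀ i, i ∉ B i) (hBsymm : ∀ i q, q ∈ B i ↔ i ∈ B q)
    (hlsymm : ∀ i q, lhat i q = lhat q i) (x : Fin n → EuclideanSpace ℝ (Fin d)) (i : Fin n)
    (y : EuclideanSpace ℝ (Fin d)) :
    obj a A dhat B lhat (Function.update x i y)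
      = obj a A dhat B lhat x
        + (blockObj a A dhat B lhat x i y - blockObj a A dhat B lhat x i (x i)) := by
  classical
  set K : Fin n → Fin n → EuclideanSpace ℝ (Fin d) → EuclideanSpace ℝ (Fin d) → ℝ :=
    fun p q u v => if q ∈ B p then sqDistBall v (lhat p q) u else 0
  have hK : ∀ p q u v, K p q u v = K q p v u := by
    intro p q u v
    simp only [K, hBsymm p q, sqDistBall, hlsymm p q, norm_sub_rev u v]
  have hdiag : ∀ p u v, K p p u v = 0 := fun p _ _ => if_neg (hBirr p)
  have hobj : ∀ z, obj a A dhat B lhat z = ∑ p, ∑ j ∈ A p, sqDistBall (a j) (dhat p j) (z p)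
      + 1 / 2 * ∑ p, ∑ q, K p q (z p) (z q) := by
    intro z
    simp only [K, sum_ite_mem, univ_inter]
    rfl
  have hKi : ∀ u, ∑ q, K i q u (x q) = ∑ q ∈ B i, sqDistBall (x q) (lhat i q) u := by
    intro u
    simp only [K, sum_ite_mem, univ_inter]
  rw [hobj, hobj, sum_apply_update (fun p u => ∑ j ∈ A p, sqDistBall (a j) (dhat p j) u),
    sum_sum_apply_update_of_symm K hK hdiag, blockObj, blockObj, ← hKi, ← hKi]
  simp only [sum_sub_distrib, nsmul_eq_mul]
  ring

lemma blockObj_add_le (hdhat : ∀ i, ∀ j ∈ A i, 0 ≤ dhat i j)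
    (hlhat : ∀ i, ∀ q ∈ B i, 0 ≤ lhat i q) (x : Fin n → EuclideanSpace ℝ (Fin d)) (i : Fin n)
    (y v : EuclideanSpace ℝ (Fin d)) :
    blockObj a A dhat B lhat x i (y + v) ≤ blockObj a A dhat B lhat x i y
      + ⟪blockObjGrad a A dhat B lhat x i y, v⟫ + (((A i).card : ℝ) + (B i).card) * ‖v‖ ^ 2 := by
  have hA := sum_le_sum fun j hj => sqDistBall_add_le (a := a j) (z := y) (hdhat i j hj) v
  have hB := sum_le_sum fun q hq => sqDistBall_add_le (a := x q) (z := y) (hlhat i q hq) v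
  simp only [sum_add_distrib, sum_const, nsmul_eq_mul, ← mul_sum] at hA hB
  rw [blockObjGrad, real_inner_smul_left, inner_add_left, sum_inner, sum_inner]
  unfold blockObj
  linarith

lemma le_blockObj_add (hdhat : ∀ i, ∀ j ∈ A i, 0 ≤ dhat i j)
    (hlhat : ∀ i, ∀ q ∈ B i, 0 ≤ lhat i q) (x : Fin n → EuclideanSpace ℝ (Fin d)) (i : Fin n)
    (y v : EuclideanSpace ℝ (Fin d)) :
    blockObj a A dhat B lhat x i y + ⟪blockObjGrad a A dhat B lhat x i y, v⟫
      ≤ blockObj a A dhat B lhat x i (y + v) := by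
  have hA := sum_le_sum fun j hj => le_sqDistBall_add (a := a j) (z := y) (hdhat i j hj) v
  have hB := sum_le_sum fun q hq => le_sqDistBall_add (a := x q) (z := y) (hlhat i q hq) v
  simp only [sum_add_distrib, ← mul_sum] at hA hB
  rw [blockObjGrad, real_inner_smul_left, inner_add_left, sum_inner, sum_inner]
  unfold blockObj
  linarith

lemma obj_update_add_le (hdhat : ∀ i, ∀ j ∈ A i, 0 ≤ dhat i j)
    (hlhat : ∀ i, ∀ q ∈ B i, 0 ≤ lhat i q) (hBirr : ∀ i, i ∉ B i)
    (hBsymm : ∀ i q, q ∈ B i ↔ i ∈ B q) (hlsymm : ∀ i q, lhat i q = lhat q i)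
    (x : Fin n → EuclideanSpace ℝ (Fin d)) (i : Fin n) (v : EuclideanSpace ℝ (Fin d)) :
    obj a A dhat B lhat (Function.update x i (x i + v))
      ≤ obj a A dhat B lhat x + ⟪blockObjGrad a A dhat B lhat x i (x i), v⟫
        + (((A i).card : ℝ) + (B i).card) * ‖v‖ ^ 2 := by
  rw [obj_update hBirr hBsymm hlsymm]
  linarith [blockObj_add_le (a := a) hdhat hlhat x i (x i) v]

lemma blockGrad_obj (hdhat : ∀ i, ∀ j ∈ A i, 0 ≤ dhat i j)
    (hlhat : ∀ i, ∀ q ∈ B i, 0 ≤ lhat i q) (hBirr : ∀ i, i ∉ B i)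
    (hBsymm : ∀ i q, q ∈ B i ↔ i ∈ B q) (hlsymm : ∀ i q, lhat i q = lhat q i)
    (x : Fin n → EuclideanSpace ℝ (Fin d)) (i : Fin n) :
    blockGrad (obj a A dhat B lhat) i x = blockObjGrad a A dhat B lhat x i (x i) := by
  refine HasGradientAt.gradient
    (hasGradientAt_of_le_of_le (C := ((A i).card : ℝ) + (B i).card) (fun v => ?_) (fun v => ?_))
  · simpa only [Function.update_eq_self] using
      obj_update_add_le hdhat hlhat hBirr hBsymm hlsymm x i v
  · simp only [obj_update hBirr hBsymm hlsymm, Function.update_eq_self]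
    linarith [le_blockObj_add (a := a) hdhat hlhat x i (x i) v]

end Objective

section Algorithm

variable {d n : ℕ} {X : ℕ → Fin n → EuclideanSpace ℝ (Fin d)}

lemma interm_zero (k : ℕ) : interm X k 0 = X k := by
  ext1 t; simp [interm]

lemma interm_card (k : ℕ) : interm X k n = X (k + 1) := by
  ext1 t; simp [interm]

lemma interm_succ (k : ℕ) (i : Fin n) :
    interm X k (i + 1) = Function.update (interm X k i) i (X (k + 1) i) := by
  ext1 t
  rcases eq_or_ne t i with rfl | hti
  · simp [interm]
  · have : (t : ℕ) < i + 1 ↔ (t : ℕ) < i := by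
      have := Fin.val_ne_of_ne hti; omega
    simp [interm, Function.update_of_ne hti, this]

variable {J : Type*} {a : J → EuclideanSpace ℝ (Fin d)} {A : Fin n → Finset J}
  {dhat : Fin n → J → ℝ} {B : Fin n → Finset (Fin n)} {lhat : Fin n → Fin n → ℝ}

lemma IsPPM.eq_sub_smul_blockObjGrad (hX : IsPPM a A dhat B lhat X) (k : ℕ) (i : Fin n)
    (hm : ((A i).card : ℝ) + (B i).card ≠ 0) :
    X (k + 1) i = interm X k i i - (4 * (((A i).card : ℝ) + (B i).card))⁻¹ •
      blockObjGrad a A dhat B lhat (interm X k i) i (interm X k i i) := by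
  rw [hX k i]
  simp only [blockObjGrad, interm, lt_irrefl, if_false, smul_add, smul_sub,
    sum_sub_distrib, sum_const, ← Nat.cast_smul_eq_nsmul ℝ]
  match_scalars <;> field_simp <;> ring

lemma IsPPM.sq_norm_blockGrad_le (hX : IsPPM a A dhat B lhat X)
    (hdhat : ∀ i, ∀ j ∈ A i, 0 ≤ dhat i j) (hlhat : ∀ i, ∀ q ∈ B i, 0 ≤ lhat i q)
    (hBirr : ∀ i, i ∉ B i) (hBsymm : ∀ i q, q ∈ B i ↔ i ∈ B q)
    (hlsymm : ∀ i q, lhat i q = lhat q i) {τ : ℝ} (k : ℕ) (i : Fin n)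
    (hcard : 1 ≤ (A i).card + (B i).card) (hτ : 4 * (((A i).card : ℝ) + (B i).card) ≤ τ) :
    ‖blockGrad (obj a A dhat B lhat) i (interm X k i)‖ ^ 2
      ≤ 2 * τ * (obj a A dhat B lhat (interm X k i)
        - obj a A dhat B lhat (interm X k (i + 1))) := by
  set x := interm X k i
  set L : ℝ := 4 * (((A i).card : ℝ) + (B i).card)
  have hm : (1 : ℝ) ≤ (A i).card + (B i).card := by exact_mod_cast hcard
  have hL : 0 < L := by positivity
  have hdescent : ∀ v, obj a A dhat B lhat (Function.update x i (x i + v))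
      ≤ obj a A dhat B lhat (Function.update x i (x i))
        + ⟪blockObjGrad a A dhat B lhat x i (x i), v⟫ + L / 2 * ‖v‖ ^ 2 := by
    intro v
    rw [Function.update_eq_self]
    nlinarith [obj_update_add_le (a := a) hdhat hlhat hBirr hBsymm hlsymm x i v, sq_nonneg ‖v‖]
  have hdecrease := sq_norm_le_of_descent
    (f := fun y => obj a A dhat B lhat (Function.update x i y)) hL hdescent
  rw [← hX.eq_sub_smul_blockObjGrad k i (zero_lt_one.trans_le hm).ne', Function.update_eq_self,
    ← interm_succ, ← blockGrad_obj hdhat hlhat hBirr hBsymm hlsymm] at hdecrease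
  nlinarith [sq_nonneg ‖blockGrad (obj a A dhat B lhat) i x‖]

lemma IsPPM.sum_sq_norm_blockGrad_le (hX : IsPPM a A dhat B lhat X)
    (hdhat : ∀ i, ∀ j ∈ A i, 0 ≤ dhat i j) (hlhat : ∀ i, ∀ q ∈ B i, 0 ≤ lhat i q)
    (hBirr : ∀ i, i ∉ B i) (hBsymm : ∀ i q, q ∈ B i ↔ i ∈ B q)
    (hlsymm : ∀ i q, lhat i q = lhat q i) (hcard : ∀ i, 1 ≤ (A i).card + (B i).card) {τ : ℝ}
    (hτ : ∀ i, 4 * (((A i).card : ℝ) + (B i).card) ≤ τ) (k : ℕ) :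
    ∑ i : Fin n, ‖blockGrad (obj a A dhat B lhat) i (interm X k i)‖ ^ 2
      ≤ 2 * τ * obj a A dhat B lhat (X k) - 2 * τ * obj a A dhat B lhat (X (k + 1)) :=
  calc ∑ i : Fin n, ‖blockGrad (obj a A dhat B lhat) i (interm X k i)‖ ^ 2
      ≤ ∑ i : Fin n, (2 * τ * obj a A dhat B lhat (interm X k i)
          - 2 * τ * obj a A dhat B lhat (interm X k (i + 1))) := sum_le_sum fun i _ =>
        (hX.sq_norm_blockGrad_le hdhat hlhat hBirr hBsymm hlsymm k i (hcard i) (hτ i)).trans_eq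
          (mul_sub _ _ _)
    _ = 2 * τ * obj a A dhat B lhat (X k) - 2 * τ * obj a A dhat B lhat (X (k + 1)) := by
      rw [Fin.sum_univ_eq_sum_range (fun i => 2 * τ * obj a A dhat B lhat (interm X k i)
        - 2 * τ * obj a A dhat B lhat (interm X k (i + 1))), sum_range_sub', interm_zero,
        interm_card]

end Algorithm

theorem stmt13_general (d n : ℕ) {J : Type*}
    (a : J → EuclideanSpace ℝ (Fin d))
    (A : Fin n → Finset J) (dhat : Fin n → J → ℝ)
    (B : Fin n → Finset (Fin n)) (lhat : Fin n → Fin n → ℝ)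
    (hdhat : ∀ i, ∀ j ∈ A i, 0 ≤ dhat i j)
    (hlhat : ∀ i, ∀ q ∈ B i, 0 ≤ lhat i q)
    (hBirr : ∀ i : Fin n, i ∉ B i)
    (hBsymm : ∀ i q : Fin n, q ∈ B i ↔ i ∈ B q)
    (hlsymm : ∀ i q : Fin n, lhat i q = lhat q i)
    (hcard : ∀ i : Fin n, 1 ≤ (A i).card + (B i).card)
    (X : ℕ → Fin n → EuclideanSpace ℝ (Fin d))
    (hX : IsPPM a A dhat B lhat X)
    (τ : ℝ)
    (hτ : IsGreatest (Set.range fun i : Fin n =>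
      4 * (((A i).card : ℝ) + ((B i).card : ℝ))) τ) :
    Summable (fun k : ℕ =>
      ∑ i : Fin n, ‖blockGrad (obj a A dhat B lhat) i (interm X k (i : ℕ))‖ ^ 2) ∧
    (∑' k : ℕ, ∑ i : Fin n, ‖blockGrad (obj a A dhat B lhat) i (interm X k (i : ℕ))‖ ^ 2)
      ≤ 2 * τ * obj a A dhat B lhat (X 0) := by
  obtain ⟨i₀, hi₀⟩ := hτ.1
  have hτ_nonneg : 0 ≤ τ := hi₀ ▸ by positivity
  exact summable_and_tsum_le_of_le_sub_succ (fun k => by positivity)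
    (fun k => mul_nonneg (by positivity) (obj_nonneg (X k)))
    (hX.sum_sq_norm_blockGrad_le hdhat hlhat hBirr hBsymm hlsymm hcard
      (fun i => hτ.2 ⟨i, rfl⟩))

theorem stmt13 (d n : ℕ) (hd : 1 ≤ d) (hn : 1 ≤ n) {J : Type*} [Fintype J]
    (a : J → EuclideanSpace ℝ (Fin d))
    (A : Fin n → Finset J) (dhat : Fin n → J → ℝ)
    (B : Fin n → Finset (Fin n)) (lhat : Fin n → Fin n → ℝ)
    (hdhat : ∀ i, ∀ j ∈ A i, 0 ≤ dhat i j)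
    (hlhat : ∀ i, ∀ q ∈ B i, 0 ≤ lhat i q)
    (hBirr : ∀ i : Fin n, i ∉ B i)
    (hBsymm : ∀ i q : Fin n, q ∈ B i ↔ i ∈ B q)
    (hlsymm : ∀ i q : Fin n, lhat i q = lhat q i)
    (hcard : ∀ i : Fin n, 1 ≤ (A i).card + (B i).card)
    (X : ℕ → Fin n → EuclideanSpace ℝ (Fin d))
    (hX : IsPPM a A dhat B lhat X)
    (τ : ℝ)
    (hτ : IsGreatest (Set.range fun i : Fin n =>
      4 * (((A i).card : ℝ) + ((B i).card : ℝ))) τ) :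
    Summable (fun k : ℕ =>
      ∑ i : Fin n, ‖blockGrad (obj a A dhat B lhat) i (interm X k (i : ℕ))‖ ^ 2) ∧
    (∑' k : ℕ, ∑ i : Fin n, ‖blockGrad (obj a A dhat B lhat) i (interm X k (i : ℕ))‖ ^ 2)
      ≤ 2 * τ * obj a A dhat B lhat (X 0) :=
  stmt13_general d n a A dhat B lhat hdhat hlhat hBirr hBsymm hlsymm hcard X hX τ hτ
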